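/- arXiv:1709.03471 — 3 statements merged into one kernel-verified Lean document; each statement's English description precedes it below -/
import Mathlib

section
/- Let μ > 0, 0 < ν < 1 and 0 < p < 1 be real numbers, and set y_m := ⌊μ/(1−p)^(1/ν)⌋. Then the supremum over natural numbers y of (μ^y/y!)^ν / (p(1−p)^y) equals (1/p) · μ^(ν·y_m) / ((1−p)^(y_m) · (y_m!)^ν), and the supremum is attained at y = y_m. -/
/-!
The successive ratios of `q(y) = (μ^y / y!)^ν / (p (1-p)^y)` are
`q(y+1) / q(y) = (μ / (y+1))^ν / (1-p)`, which is at least `1` exactly when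
`y + 1 ≤ μ / (1-p)^(1/ν)`. So `q` increases up to `⌊μ / (1-p)^(1/ν)⌋` and decreases afterwards.
-/

open Real

theorem Nat.apply_le_apply_of_unimodal {α : Type*} [Preorder α] {f : ℕ → α} {m : ℕ}
    (hinc : ∀ n < m, f n ≤ f (n + 1)) (hdec : ∀ n ≥ m, f (n + 1) ≤ f n) (n : ℕ) :
    f n ≤ f m := by
  rcases le_total n m with hnm | hmn
  · exact Nat.decreasingInduction (fun k hk ih => (hinc k hk).trans ih) le_rfl hnm
  · exact antitoneOn_nat_Ici_of_succ_le hdec (le_refl m) hmn hmn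

theorem Nat.apply_le_apply_floor {α R : Type*} [Preorder α] [Semiring R] [LinearOrder R]
    [IsStrictOrderedRing R] [FloorSemiring R] {f : ℕ → α} {c : R}
    (hinc : ∀ n : ℕ, (n + 1 : R) ≤ c → f n ≤ f (n + 1))
    (hdec : ∀ n : ℕ, c < n + 1 → f (n + 1) ≤ f n) (n : ℕ) :
    f n ≤ f ⌊c⌋₊ := by
  refine Nat.apply_le_apply_of_unimodal (fun k hk => hinc k ?_) (fun k hk => hdec k ?_) n
  · exact_mod_cast (Nat.le_floor_iff' k.succ_ne_zero).1 hk
  · exact (Nat.lt_floor_add_one c).trans_le (by exact_mod_cast Nat.succ_le_succ hk)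

theorem Real.le_div_rpow_iff {q μ t ν : ℝ} (hq : 0 < q) (hμ : 0 ≤ μ)
    (ht : 0 < t) (hν : 0 < ν) : q ≤ (μ / t) ^ ν ↔ t ≤ μ / q ^ (1 / ν) := by
  rw [← rpow_inv_le_iff_of_pos hq.le (by positivity) hν, one_div, le_div_iff₀ ht,
    le_div_iff₀ (by positivity), mul_comm]

noncomputable def comPoissonGeometricRatio (μ ν p : ℝ) (y : ℕ) : ℝ :=
  (μ ^ y / (y.factorial : ℝ)) ^ ν / (p * (1 - p) ^ y)

namespace comPoissonGeometricRatio

variable {μ ν p : ℝ}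

theorem pos (hμ : 0 < μ) (hp0 : 0 < p) (hp1 : p < 1) (y : ℕ) :
    0 < comPoissonGeometricRatio μ ν p y := by
  have : 0 < 1 - p := sub_pos.2 hp1
  unfold comPoissonGeometricRatio
  positivity

theorem eq_mul_rpow (hμ : 0 ≤ μ) (y : ℕ) :
    comPoissonGeometricRatio μ ν p y =
      (1 / p) * (μ ^ (ν * (y : ℝ)) / ((1 - p) ^ y * (y.factorial : ℝ) ^ ν)) := by
  have hfac : (0 : ℝ) ≤ y.factorial := Nat.cast_nonneg _
  rw [comPoissonGeometricRatio, div_rpow (by positivity) hfac, ← rpow_natCast, ← rpow_mul hμ,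
    mul_comm (y : ℝ)]
  ring

theorem succ (hμ : 0 ≤ μ) (y : ℕ) :
    comPoissonGeometricRatio μ ν p (y + 1) =
      comPoissonGeometricRatio μ ν p y * ((μ / (y + 1)) ^ ν / (1 - p)) := by
  have hstep : μ ^ (y + 1) / ((y + 1).factorial : ℝ) = μ ^ y / y.factorial * (μ / (y + 1)) := by
    push_cast [Nat.factorial_succ]
    field_simp
    ring
  rw [comPoissonGeometricRatio, comPoissonGeometricRatio, hstep,
    mul_rpow (by positivity) (by positivity), pow_succ, ← mul_assoc, mul_div_mul_comm]

theorem le_succ_iff (hμ : 0 < μ) (hν : 0 < ν) (hp0 : 0 < p) (hp1 : p < 1) (y : ℕ) :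
    comPoissonGeometricRatio μ ν p y ≤ comPoissonGeometricRatio μ ν p (y + 1) ↔
      (y + 1 : ℝ) ≤ μ / (1 - p) ^ (1 / ν) := by
  have hq : 0 < 1 - p := sub_pos.2 hp1
  rw [succ hμ.le, le_mul_iff_one_le_right (pos hμ hp0 hp1 y), one_le_div hq,
    le_div_rpow_iff hq hμ.le (by positivity) hν]

end comPoissonGeometricRatio

theorem stmt_7_general (μ ν p : ℝ) (hμ : 0 < μ) (hν0 : 0 < ν)
    (hp0 : 0 < p) (hp1 : p < 1)
    (ym : ℕ) (hym : ym = ⌊μ / (1 - p) ^ (1 / ν)⌋₊) :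
    IsGreatest
      (Set.range fun y : ℕ => (μ ^ y / (Nat.factorial y : ℝ)) ^ ν / (p * (1 - p) ^ y))
      ((1 / p) * (μ ^ (ν * (ym : ℝ)) / ((1 - p) ^ ym * (Nat.factorial ym : ℝ) ^ ν))) ∧
    (μ ^ ym / (Nat.factorial ym : ℝ)) ^ ν / (p * (1 - p) ^ ym) =
      (1 / p) * (μ ^ (ν * (ym : ℝ)) / ((1 - p) ^ ym * (Nat.factorial ym : ℝ) ^ ν)) := by
  have hle_succ := comPoissonGeometricRatio.le_succ_iff hμ hν0 hp0 hp1
  have hmax : ∀ y, comPoissonGeometricRatio μ ν p y ≤ comPoissonGeometricRatio μ ν p ym :=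
    hym ▸ Nat.apply_le_apply_floor (fun y hy => (hle_succ y).2 hy)
      (fun y hy => (le_total _ _).resolve_left fun h => hy.not_ge ((hle_succ y).1 h))
  have hval := comPoissonGeometricRatio.eq_mul_rpow (ν := ν) (p := p) hμ.le ym
  refine ⟨⟨⟨ym, hval⟩, ?_⟩, hval⟩
  rintro _ ⟨y, rfl⟩
  exact hval ▸ hmax y

/-- For `μ > 0`, `0 < ν < 1`, `0 < p < 1` and `y_m := ⌊μ/(1−p)^(1/ν)⌋`,
the supremum over naturals `y` of `(μ^y/y!)^ν / (p(1−p)^y)` equals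
`(1/p) · μ^(ν·y_m) / ((1−p)^(y_m) · (y_m!)^ν)`, attained at `y = y_m`. -/
theorem stmt_7 (μ ν p : ℝ) (hμ : 0 < μ) (hν0 : 0 < ν) (hν1 : ν < 1)
    (hp0 : 0 < p) (hp1 : p < 1)
    (ym : ℕ) (hym : ym = ⌊μ / (1 - p) ^ (1 / ν)⌋₊) :
    IsGreatest
      (Set.range fun y : ℕ => (μ ^ y / (Nat.factorial y : ℝ)) ^ ν / (p * (1 - p) ^ y))
      ((1 / p) * (μ ^ (ν * (ym : ℝ)) / ((1 - p) ^ ym * (Nat.factorial ym : ℝ) ^ ν))) ∧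
    (μ ^ ym / (Nat.factorial ym : ℝ)) ^ ν / (p * (1 - p) ^ ym) =
      (1 / p) * (μ ^ (ν * (ym : ℝ)) / ((1 - p) ^ ym * (Nat.factorial ym : ℝ) ^ ν)) :=
  stmt_7_general μ ν p hμ hν0 hp0 hp1 ym hym
end

section
/- Let μ > 0 and ν ≥ 1 be real numbers and set B := (μ^⌊μ⌋ / ⌊μ⌋!)^(ν−1). Then the COM-Poisson normalising constant satisfies 𝒵(μ, ν) = ∑_{y=0}^∞ (μ^y/y!)^ν ≤ B · e^μ. -/
/-! The Poisson weights `μ ^ y / y !` increase up to `y = ⌊μ⌋` and decrease afterwards, so they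
are bounded by their value at this mode. Hence `(μ ^ y / y !) ^ ν ≤ B * (μ ^ y / y !)` for
`ν ≥ 1`, and summing this Poisson envelope against `∑ μ ^ y / y ! = e ^ μ` gives the bound. -/

open Nat

lemma pow_succ_div_factorial_succ (x : ℝ) (n : ℕ) :
    x ^ (n + 1) / (n + 1)! = x ^ n / n ! * (x / (n + 1)) := by
  rw [pow_succ, factorial_succ, cast_mul, cast_succ]
  field_simp

lemma monotoneOn_pow_div_factorial_Iic_floor {x : ℝ} (hx : 0 ≤ x) :
    MonotoneOn (fun n : ℕ ↦ x ^ n / n !) (Set.Iic ⌊x⌋₊) := by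
  refine monotoneOn_of_le_add_one Set.ordConnected_Iic fun n _ _ hn ↦ ?_
  have hn : (n : ℝ) + 1 ≤ x := by exact_mod_cast (Nat.le_floor_iff hx).1 hn
  simp only [pow_succ_div_factorial_succ]
  exact le_mul_of_one_le_right (by positivity) ((one_le_div (by positivity)).2 hn)

lemma antitoneOn_pow_div_factorial_Ici_floor {x : ℝ} (hx : 0 ≤ x) :
    AntitoneOn (fun n : ℕ ↦ x ^ n / n !) (Set.Ici ⌊x⌋₊) := by
  refine antitoneOn_of_add_one_le Set.ordConnected_Ici fun n _ hn _ ↦ ?_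
  have hn : x ≤ n + 1 :=
    (Nat.lt_floor_add_one x).le.trans (by exact_mod_cast Nat.add_le_add_right hn 1)
  simp only [pow_succ_div_factorial_succ]
  exact mul_le_of_le_one_right (by positivity) (div_le_one_of_le₀ hn (by positivity))

lemma pow_div_factorial_le_pow_floor_div_factorial {x : ℝ} (hx : 0 ≤ x) (n : ℕ) :
    x ^ n / n ! ≤ x ^ ⌊x⌋₊ / ⌊x⌋₊ ! := by
  rcases le_total n ⌊x⌋₊ with h | h
  · exact monotoneOn_pow_div_factorial_Iic_floor hx h Set.self_mem_Iic h
  · exact antitoneOn_pow_div_factorial_Ici_floor hx Set.self_mem_Ici h h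

lemma rpow_le_rpow_sub_one_mul {a M ν : ℝ} (ha : 0 ≤ a) (haM : a ≤ M) (hν : 1 ≤ ν) :
    a ^ ν ≤ M ^ (ν - 1) * a :=
  calc a ^ ν = a ^ (ν - 1) * a := by
        rw [← Real.rpow_add_one' ha (by linarith), sub_add_cancel]
    _ ≤ M ^ (ν - 1) * a := by gcongr

/-- For `μ > 0`, `ν ≥ 1` and `B := (μ^⌊μ⌋ / ⌊μ⌋!)^(ν−1)`, the COM-Poisson
normalising constant satisfies `∑_{y=0}^∞ (μ^y/y!)^ν ≤ B · e^μ`. -/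
theorem stmt_9 (μ ν : ℝ) (hμ : 0 < μ) (hν : 1 ≤ ν)
    (B : ℝ) (hB : B = (μ ^ ⌊μ⌋₊ / (Nat.factorial ⌊μ⌋₊ : ℝ)) ^ (ν - 1)) :
    ∑' y : ℕ, (μ ^ y / (Nat.factorial y : ℝ)) ^ ν ≤ B * Real.exp μ := by
  have hweight : ∀ y : ℕ, 0 ≤ μ ^ y / y ! := fun y ↦ by positivity
  have henvelope : ∀ y : ℕ, (μ ^ y / y !) ^ ν ≤ B * (μ ^ y / y !) := fun y ↦ hB ▸
    rpow_le_rpow_sub_one_mul (hweight y)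
      (pow_div_factorial_le_pow_floor_div_factorial hμ.le y) hν
  have hpoisson : HasSum (fun y : ℕ ↦ B * (μ ^ y / y !)) (B * Real.exp μ) := by
    simpa [Real.exp_eq_exp_ℝ] using (NormedSpace.expSeries_div_hasSum_exp μ).mul_left B
  exact hpoisson.tsum_eq ▸ Summable.tsum_le_tsum henvelope
    (hpoisson.summable.of_nonneg_of_le (fun y ↦ by positivity) henvelope) hpoisson.summable
end

section
/- Let μ > 0, 0 < ν < 1 and 0 < p < 1 be real numbers, set y_m := ⌊μ/(1−p)^(1/ν)⌋ and B := (1/p) · μ^(ν·y_m) / ((1−p)^(y_m) · (y_m!)^ν). Then the COM-Poisson normalising constant satisfies 𝒵(μ, ν) = ∑_{y=0}^∞ (μ^y/y!)^ν ≤ B. -/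
/-!
With `q = 1 - p` and `c = μ / q^(1/ν)`, each term factors as `(μ^y/y!)^ν = (c^y/y!)^ν · q^y`.
The Poisson weight `c^y/y!` is largest at its mode `y = ⌊c⌋`, so the series is dominated by the
geometric series `(c^⌊c⌋/⌊c⌋!)^ν · ∑ q^y = (c^⌊c⌋/⌊c⌋!)^ν / p`, which is exactly `B`.
-/

open Nat

theorem pow_div_factorial_le_pow_div_factorial_of_le {c : ℝ} {m n : ℕ} (hmc : (m : ℝ) ≤ c)
    (hnm : n ≤ m) : c ^ n / n ! ≤ c ^ m / m ! := by
  obtain ⟨k, rfl⟩ := Nat.exists_eq_add_of_le hnm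
  have hc : 0 ≤ c := (Nat.cast_nonneg _).trans hmc
  have hfac : ((n + k)! : ℝ) ≤ n ! * ((n + k : ℕ) : ℝ) ^ k := by
    rw [← Nat.factorial_mul_ascFactorial]
    exact_mod_cast Nat.mul_le_mul_left _ (Nat.ascFactorial_le_pow_add n k)
  rw [div_le_div_iff₀ (by positivity) (by positivity)]
  calc c ^ n * (n + k)! ≤ c ^ n * (n ! * ((n + k : ℕ) : ℝ) ^ k) := by gcongr
    _ ≤ c ^ n * (n ! * c ^ k) := by gcongr
    _ = c ^ (n + k) * n ! := by ring

theorem pow_div_factorial_le_pow_div_factorial_of_ge {c : ℝ} {m n : ℕ} (hc : 0 ≤ c)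
    (hcm : c ≤ m + 1) (hmn : m ≤ n) : c ^ n / n ! ≤ c ^ m / m ! := by
  obtain ⟨k, rfl⟩ := Nat.exists_eq_add_of_le hmn
  have hfac : (m ! : ℝ) * ((m + 1 : ℕ) : ℝ) ^ k ≤ (m + k)! := by
    exact_mod_cast Nat.factorial_mul_pow_le_factorial
  rw [div_le_div_iff₀ (by positivity) (by positivity)]
  calc c ^ (m + k) * m ! = c ^ m * (m ! * c ^ k) := by ring
    _ ≤ c ^ m * (m ! * ((m + 1 : ℕ) : ℝ) ^ k) := by gcongr; push_cast; exact hcm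
    _ ≤ c ^ m * (m + k)! := by gcongr

theorem pow_div_factorial_le_floor {c : ℝ} (hc : 0 ≤ c) (n : ℕ) :
    c ^ n / n ! ≤ c ^ ⌊c⌋₊ / ⌊c⌋₊ ! := by
  rcases le_total n ⌊c⌋₊ with h | h
  · exact pow_div_factorial_le_pow_div_factorial_of_le (Nat.floor_le hc) h
  · exact pow_div_factorial_le_pow_div_factorial_of_ge hc (Nat.lt_floor_add_one c).le h

theorem tsum_le_mul_inv_one_sub_of_le_geometric {f : ℕ → ℝ} {C r : ℝ} (hf0 : ∀ n, 0 ≤ f n)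
    (hr0 : 0 ≤ r) (hr1 : r < 1) (hf : ∀ n, f n ≤ C * r ^ n) : ∑' n, f n ≤ C * (1 - r)⁻¹ := by
  have hg := (hasSum_geometric_of_lt_one hr0 hr1).mul_left C
  exact hasSum_le hf (Summable.of_nonneg_of_le hf0 hf hg.summable).hasSum hg

theorem rpow_pow_div_factorial_eq {μ a : ℝ} (hμ : 0 ≤ μ) (ha : 0 < a) (ν : ℝ) (y : ℕ) :
    (μ ^ y / y !) ^ ν = ((μ / a) ^ y / y !) ^ ν * (a ^ ν) ^ y := by
  have hsplit : μ ^ y / y ! = (μ / a) ^ y / y ! * a ^ y := by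
    rw [div_mul_eq_mul_div, ← mul_pow, div_mul_cancel₀ μ ha.ne']
  rw [hsplit, Real.mul_rpow (by positivity) (by positivity), Real.rpow_pow_comm ha.le]

theorem rpow_pow_div_factorial_le_geometric {μ a ν : ℝ} (hμ : 0 ≤ μ) (ha : 0 < a) (hν : 0 ≤ ν)
    (y : ℕ) : (μ ^ y / y !) ^ ν ≤ ((μ / a) ^ ⌊μ / a⌋₊ / ⌊μ / a⌋₊ !) ^ ν * (a ^ ν) ^ y := by
  rw [rpow_pow_div_factorial_eq hμ ha]
  exact mul_le_mul_of_nonneg_right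
    (Real.rpow_le_rpow (by positivity) (pow_div_factorial_le_floor (by positivity) y) hν)
    (by positivity)

theorem stmt_10_general (μ ν p : ℝ) (hμ : 0 < μ) (hν0 : 0 < ν)
    (hp0 : 0 < p) (hp1 : p < 1)
    (ym : ℕ) (hym : ym = ⌊μ / (1 - p) ^ (1 / ν)⌋₊)
    (B : ℝ)
    (hB : B = (1 / p) * (μ ^ (ν * (ym : ℝ)) /
      ((1 - p) ^ ym * (Nat.factorial ym : ℝ) ^ ν))) :
    ∑' y : ℕ, (μ ^ y / (Nat.factorial y : ℝ)) ^ ν ≤ B := by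
  have haν : ((1 - p) ^ (1 / ν)) ^ ν = 1 - p := by
    rw [one_div, Real.rpow_inv_rpow (by linarith) hν0.ne']
  set a := (1 - p) ^ (1 / ν)
  have ha : 0 < a := Real.rpow_pos_of_pos (by linarith) _
  have henvelope := rpow_pow_div_factorial_le_geometric hμ.le ha hν0.le
  rw [← hym, haν] at henvelope
  set C := ((μ / a) ^ ym / ym !) ^ ν
  have hC : C * (1 - p) ^ ym = μ ^ (ν * (ym : ℝ)) / ym ! ^ ν := by
    rw [← haν, ← rpow_pow_div_factorial_eq hμ.le ha, Real.div_rpow (by positivity) (by positivity),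
      mul_comm ν, Real.rpow_natCast_mul hμ.le]
  calc ∑' y : ℕ, (μ ^ y / (y ! : ℝ)) ^ ν ≤ C * (1 - (1 - p))⁻¹ :=
        tsum_le_mul_inv_one_sub_of_le_geometric (fun y ↦ by positivity) (by linarith)
          (by linarith) henvelope
    _ = B := by
        rw [hB, mul_comm ((1 - p) ^ ym), ← div_div, ← hC, sub_sub_cancel,
          mul_div_cancel_right₀ C (pow_ne_zero ym (sub_ne_zero.2 hp1.ne')), one_div, mul_comm]

/-- For `μ > 0`, `0 < ν < 1`, `0 < p < 1`, `y_m := ⌊μ/(1−p)^(1/ν)⌋` and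
`B := (1/p) · μ^(ν·y_m) / ((1−p)^(y_m) · (y_m!)^ν)`, the COM-Poisson normalising constant
satisfies `∑_{y=0}^∞ (μ^y/y!)^ν ≤ B`. -/
theorem stmt_10 (μ ν p : ℝ) (hμ : 0 < μ) (hν0 : 0 < ν) (hν1 : ν < 1)
    (hp0 : 0 < p) (hp1 : p < 1)
    (ym : ℕ) (hym : ym = ⌊μ / (1 - p) ^ (1 / ν)⌋₊)
    (B : ℝ)
    (hB : B = (1 / p) * (μ ^ (ν * (ym : ℝ)) /
      ((1 - p) ^ ym * (Nat.factorial ym : ℝ) ^ ν))) :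
    ∑' y : ℕ, (μ ^ y / (Nat.factorial y : ℝ)) ^ ν ≤ B :=
  stmt_10_general μ ν p hμ hν0 hp0 hp1 ym hym B hB
end
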